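/- For k ≥ 2, if f is a homomorphism from the freezing gadget F_k(x,y) to the odd wheel W_{2k+1} with f(x) = f(y) = α (the hub), then f is frozen. -/

import Mathlib

def IsHom {A B : Type*} (AdjG : A → A → Prop) (AdjH : B → B → Prop) (f : A → B) : Prop :=
  ∀ u v : A, AdjG u v → AdjH (f u) (f v)

open Classical in
/-- The map obtained from `f` by recolouring the vertex `v` to the colour `b`. -/
noncomputable def recol {A B : Type*} (f : A → B) (v : A) (b : B) : A → B :=
  fun x => if x = v then b else f x

/-- `f` is frozen: a homomorphism such that no single-vertex recolouring is one. -/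
def Frozen {A B : Type*} (AdjG : A → A → Prop) (AdjH : B → B → Prop) (f : A → B) : Prop :=
  IsHom AdjG AdjH f ∧ ∀ (v : A) (b : B), b ≠ f v → ¬ IsHom AdjG AdjH (recol f v b)

/-- The vertex set of the wheel `W_{2k+1}`: `none` is the hub `α`, `some i` the rim. -/
abbrev WheelV (k : ℕ) : Type := Option (ZMod (2 * k + 1))

/-- Adjacency in the wheel `W_{2k+1}`: the hub is adjacent to every rim vertex and rim
vertices `i, j` are adjacent iff they are consecutive on the `(2k+1)`-cycle. -/
def WheelAdj (k : ℕ) : WheelV k → WheelV k → Prop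
  | none, none => False
  | none, some _ => True
  | some _, none => True
  | some i, some j => j = i + 1 ∨ i = j + 1

/-- The vertex set of the freezing gadget `F_k(x,y)`. -/
inductive GV (k : ℕ) : Type
  | x : GV k
  | y : GV k
  | zx : ZMod (4 * k - 2) → GV k
  | zy : ZMod (4 * k - 2) → GV k
  | bx : GV k
  | b_y : GV k
  | w : ZMod (2 * k + 1) → GV k
  | al : GV k
deriving DecidableEq

/-- The edges of the freezing gadget `F_k(x,y)` (one orientation of each edge):
`z^x` and `z^y` are cycles of length `4k-2`; `z^x_1, z^x_{2k}` are adjacent to `x` and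
`z^y_1, z^y_{2k}` to `y`; `z^x_0, z^x_{2k-1}` are adjacent to `b^x` and `z^y_0, z^y_{2k-1}`
to `b^y`; `y` is adjacent to `b^x` and `x` to `b^y`; `w` is a cycle of length `2k+1`; and
`α'` is joined to every vertex except itself, `x`, `y` and the neighbours of `x` and `y`. -/
def GE (k : ℕ) : GV k → GV k → Prop
  | .zx i, .zx j => j = i + 1
  | .zy i, .zy j => j = i + 1
  | .x, .zx i => i = 1 ∨ i = ((2 * k : ℕ) : ZMod (4 * k - 2))
  | .y, .zy i => i = 1 ∨ i = ((2 * k : ℕ) : ZMod (4 * k - 2))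
  | .bx, .zx i => i = 0 ∨ i = ((2 * k - 1 : ℕ) : ZMod (4 * k - 2))
  | .b_y, .zy i => i = 0 ∨ i = ((2 * k - 1 : ℕ) : ZMod (4 * k - 2))
  | .y, .bx => True
  | .x, .b_y => True
  | .w i, .w j => j = i + 1
  | .al, .zx i => i ≠ 1 ∧ i ≠ ((2 * k : ℕ) : ZMod (4 * k - 2))
  | .al, .zy i => i ≠ 1 ∧ i ≠ ((2 * k : ℕ) : ZMod (4 * k - 2))
  | .al, .w _ => True
  | _, _ => False

/-- The (symmetric) adjacency relation of the freezing gadget `F_k(x,y)`. -/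
def GAdj (k : ℕ) (u v : GV k) : Prop := GE k u v ∨ GE k v u

/-!
The apex `α'` is adjacent to the whole odd cycle `w`; were `f α'` a rim vertex, `w` would map
into its neighbourhood, which is bipartite (hub against rim), so `f α' = α`. Every vertex of
`w`, of the `z`-cycles and `b^x, b^y` then has a neighbour coloured `α` and lies on a closed walk
of length `2k+1` coloured inside the rim `C_{2k+1}`: the cycle `w`, and `b^x z_0 ⋯ z_{2k-1}`,
`b^x z_{2k-1} ⋯ z_{4k-3} z_0` and their `y`-analogues. An odd closed walk of length `2k+1` on
`C_{2k+1}` winds once around it, so such a vertex sees the colours `c - 1`, `c + 1` and `α`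
around it, which pins its colour to `c`. The vertices `x`, `y`, `α'` are coloured `α` and see two
rim colours without a common rim neighbour, so they are pinned as well. The `y`-side follows
from the `x`-side through the automorphism exchanging `x` and `y`.
-/

def ColourForced {A B : Type*} (AdjG : A → A → Prop) (AdjH : B → B → Prop) (f : A → B)
    (v : A) : Prop :=
  ∀ b, (∀ u, AdjG v u → AdjH b (f u)) → b = f v

section Forced

variable {A A' B : Type*} {AdjG : A → A → Prop} {AdjG' : A' → A' → Prop}
  {AdjH : B → B → Prop} {f : A → B}

theorem IsHom.comp {σ : A' → A} (hf : IsHom AdjG AdjH f) (hσ : IsHom AdjG' AdjG σ) :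
    IsHom AdjG' AdjH (f ∘ σ) :=
  fun u v h => hf _ _ (hσ u v h)

theorem ColourForced.of_comp {σ : A' → A} (hσ : IsHom AdjG' AdjG σ) {v : A'}
    (h : ColourForced AdjG' AdjH (f ∘ σ) v) : ColourForced AdjG AdjH f (σ v) :=
  fun b hb => h b fun u hu => hb (σ u) (hσ v u hu)

theorem frozen_of_forall_colourForced (hirr : ∀ v, ¬ AdjG v v) (hf : IsHom AdjG AdjH f)
    (h : ∀ v, ColourForced AdjG AdjH f v) : Frozen AdjG AdjH f := by
  refine ⟨hf, fun v b hb hrec => hb (h v b fun u hu => ?_)⟩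
  have hne : u ≠ v := fun huv => hirr v (huv ▸ hu)
  simpa [recol, hne] using hrec v u hu

end Forced

section IntWalk

variable {A : ℕ → ℤ} {L : ℕ}

theorem abs_sub_le_of_steps (h : ∀ i < L, A (i + 1) = A i + 1 ∨ A (i + 1) = A i - 1)
    {i j : ℕ} (hij : i ≤ j) (hjL : j ≤ L) : |A j - A i| ≤ j - i := by
  induction j, hij using Nat.le_induction with
  | base => simp
  | succ j hij ih =>
    have ih := abs_le.mp (ih (by omega))
    rw [abs_le]
    rcases h j (by omega) with h' | h' <;> rw [h'] <;> push_cast <;> constructor <;> omega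

theorem even_sub_add_of_steps (h : ∀ i < L, A (i + 1) = A i + 1 ∨ A (i + 1) = A i - 1)
    {i : ℕ} (hi : i ≤ L) : Even (A i - A 0 + i) := by
  induction i with
  | zero => simp
  | succ i ih =>
    obtain ⟨m, hm⟩ := ih (by omega)
    rcases h i (by omega) with h' | h'
    · exact ⟨m + 1, by push_cast; omega⟩
    · exact ⟨m, by push_cast; omega⟩

/-- The integer walk ends at `±L` because it ends at a multiple of `L` of the parity of `L`;
travelling that far in `L` steps forces every step to go the same way. -/
theorem exists_eq_mul_of_steps_of_dvd (hL : Odd L) (h0 : A 0 = 0)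
    (h : ∀ i < L, A (i + 1) = A i + 1 ∨ A (i + 1) = A i - 1) (hdvd : (L : ℤ) ∣ A L) :
    ∃ e : ℤ, (e = 1 ∨ e = -1) ∧ ∀ i ≤ L, A i = i * e := by
  obtain ⟨q, hAL⟩ := hdvd
  have hbound := abs_le.mp (abs_sub_le_of_steps h (Nat.zero_le L) le_rfl)
  obtain ⟨m, hm⟩ := even_sub_add_of_steps h (le_refl L)
  obtain ⟨l, hl⟩ := hL
  rw [h0, hAL] at hbound hm
  have hq : q = 1 ∨ q = -1 := by
    simp only [Nat.cast_zero, sub_zero] at hbound hm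
    have hle : -1 ≤ q ∧ q ≤ 1 := by constructor <;> nlinarith
    have hq0 : q ≠ 0 := by rintro rfl; omega
    omega
  refine ⟨q, hq, fun i hi => ?_⟩
  have h1 := abs_le.mp (abs_sub_le_of_steps h (Nat.zero_le i) hi)
  have h2 := abs_le.mp (abs_sub_le_of_steps h hi le_rfl)
  rw [h0] at h1
  rw [hAL] at h2
  rcases hq with rfl | rfl <;> push_cast at * <;> omega

end IntWalk

namespace ZMod

variable {n : ℕ}

theorem natCast_ne_zero_of_lt_two_mul {m : ℕ} (h0 : 0 < m) (h : m < 2 * n) (hmn : m ≠ n) :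
    (m : ZMod n) ≠ 0 := by
  rw [Ne, ZMod.natCast_eq_zero_iff]
  rintro ⟨q, rfl⟩
  rcases q with _ | _ | q
  · simp at h0
  · simp at hmn
  · nlinarith

theorem not_forall_iff_not_of_odd (hn : Odd n) (P : ZMod n → Prop) :
    ¬ ∀ i, (P (i + 1) ↔ ¬ P i) := by
  intro h
  obtain ⟨m, rfl⟩ := hn
  have heven : ∀ j : ℕ, P (2 * j) ↔ P 0 := by
    intro j
    induction j with
    | zero => simp
    | succ j ih =>
      rw [Nat.cast_succ, mul_add_one, ← ih, show 2 * (j : ZMod (2 * m + 1)) + 2 = 2 * j + 1 + 1 by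
        ring, h, h, not_not]
  have hwrap : 2 * (m : ZMod (2 * m + 1)) + 1 = 0 := by exact_mod_cast ZMod.natCast_self _
  have := h (2 * m)
  rw [hwrap, heven] at this
  exact iff_not_self this

theorem exists_eq_add_mul_of_odd (hn : Odd n) (c : ZMod n → ZMod n)
    (h : ∀ i, c (i + 1) = c i + 1 ∨ c (i + 1) = c i - 1) :
    ∃ δ : ZMod n, (δ = 1 ∨ δ = -1) ∧ ∀ i, c i = c 0 + i * δ := by
  classical
  have : NeZero n := ⟨hn.pos.ne'⟩
  let s : ℕ → ℤ := fun j => if c (j + 1) = c j + 1 then 1 else -1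
  let A : ℕ → ℤ := fun m => ∑ j ∈ Finset.range m, s j
  have hA : ∀ m, A (m + 1) = A m + s m := fun m => Finset.sum_range_succ _ _
  have hstep : ∀ j, A (j + 1) = A j + 1 ∨ A (j + 1) = A j - 1 := by
    intro j
    rw [hA]
    by_cases hc : c (j + 1) = c j + 1 <;> simp [s, hc, sub_eq_add_neg]
  have hlift : ∀ m : ℕ, c m = c 0 + A m := by
    intro m
    induction m with
    | zero => simp [A]
    | succ m ih =>
      have hsm : (s m : ZMod n) = c (m + 1) - c m := by
        by_cases hc : c (m + 1) = c m + 1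
        · simp [s, hc]
        · simp only [s, if_neg hc, Int.cast_neg, Int.cast_one, (h m).resolve_left hc]
          ring
      rw [Nat.cast_succ, hA, Int.cast_add, hsm, ← add_assoc, ← ih]
      ring
  have hdvd : (n : ℤ) ∣ A n := by
    rw [← ZMod.intCast_zmod_eq_zero_iff_dvd]
    have := hlift n
    rw [ZMod.natCast_self] at this
    linear_combination -this
  obtain ⟨e, he, hAe⟩ :=
    exists_eq_mul_of_steps_of_dvd hn (by simp [A]) (fun i _ => hstep i) hdvd
  refine ⟨e, by rcases he with rfl | rfl <;> simp, fun i => ?_⟩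
  rw [← ZMod.natCast_zmod_val i, hlift, hAe _ (ZMod.val_lt i).le]
  push_cast
  ring

end ZMod

section Wheel

variable {k : ℕ}

theorem wheelAdj_some_some {c d : ZMod (2 * k + 1)} :
    WheelAdj k (some c) (some d) ↔ d = c + 1 ∨ d = c - 1 :=
  or_congr_right (by rw [eq_sub_iff_add_eq, eq_comm])

theorem ne_none_of_wheelAdj_none {o : WheelV k} (h : WheelAdj k o none) : o ≠ none := by
  rintro rfl
  exact h

theorem small_ne_zero (hk : 2 ≤ k) :
    (1 : ZMod (2 * k + 1)) ≠ 0 ∧ (2 : ZMod (2 * k + 1)) ≠ 0 ∧ (3 : ZMod (2 * k + 1)) ≠ 0 ∧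
      (4 : ZMod (2 * k + 1)) ≠ 0 ∧ (6 : ZMod (2 * k + 1)) ≠ 0 := by
  have key (m : ℕ) (hm : 0 < m ∧ m ≤ 6 ∧ m ≠ 5) : (m : ZMod (2 * k + 1)) ≠ 0 :=
    ZMod.natCast_ne_zero_of_lt_two_mul hm.1 (by omega) (by omega)
  exact ⟨by exact_mod_cast key 1 (by norm_num), by exact_mod_cast key 2 (by norm_num),
    by exact_mod_cast key 3 (by norm_num), by exact_mod_cast key 4 (by norm_num),
    by exact_mod_cast key 6 (by norm_num)⟩

theorem rim_triangle_free (hk : 2 ≤ k) {a b c : ZMod (2 * k + 1)}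
    (hab : WheelAdj k (some a) (some b)) (hbc : WheelAdj k (some b) (some c))
    (hac : WheelAdj k (some a) (some c)) : False := by
  obtain ⟨h1, -, h3, -, -⟩ := small_ne_zero hk
  rw [wheelAdj_some_some] at hab hbc hac
  rcases hab with rfl | rfl <;> rcases hbc with rfl | rfl <;> rcases hac with h | h <;>
    first
    | exact h1 (by linear_combination h)
    | exact h1 (by linear_combination -h)
    | exact h3 (by linear_combination h)
    | exact h3 (by linear_combination -h)

theorem eq_some_of_wheelAdj (hk : 2 ≤ k) {ε c : ZMod (2 * k + 1)} (hε : ε = 1 ∨ ε = -1)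
    {β : WheelV k} (h0 : WheelAdj k β none) (h1 : WheelAdj k β (some (c - ε)))
    (h2 : WheelAdj k β (some (c + ε))) : β = some c := by
  obtain ⟨-, h2z, -, h4z, -⟩ := small_ne_zero hk
  obtain ⟨t, rfl⟩ := Option.ne_none_iff_exists'.mp (ne_none_of_wheelAdj_none h0)
  rw [wheelAdj_some_some] at h1 h2
  rcases hε with rfl | rfl <;> rcases h1 with h1 | h1 <;> rcases h2 with h2 | h2 <;>
    first
    | exact congrArg some (by linear_combination -h1)
    | exact (h2z (by linear_combination h1 - h2)).elim
    | exact (h2z (by linear_combination h2 - h1)).elim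
    | exact (h4z (by linear_combination h1 - h2)).elim
    | exact (h4z (by linear_combination h2 - h1)).elim

theorem eq_none_of_wheelAdj (hk : 2 ≤ k) {e c : ZMod (2 * k + 1)} (he : e = 1 ∨ e = -1)
    {β : WheelV k} (h1 : WheelAdj k β (some c)) (h2 : WheelAdj k β (some (c + 4 * e))) :
    β = none := by
  obtain ⟨-, h2z, -, h4z, h6z⟩ := small_ne_zero hk
  rcases β with _ | t
  · rfl
  rw [wheelAdj_some_some] at h1 h2
  exfalso
  rcases he with rfl | rfl <;> rcases h1 with h1 | h1 <;> rcases h2 with h2 | h2 <;>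
    first
    | exact h2z (by linear_combination h1 - h2)
    | exact h2z (by linear_combination h2 - h1)
    | exact h4z (by linear_combination h1 - h2)
    | exact h4z (by linear_combination h2 - h1)
    | exact h6z (by linear_combination h1 - h2)
    | exact h6z (by linear_combination h2 - h1)

end Wheel

section OddCycle

variable {A : Type*} {AdjG : A → A → Prop} {k : ℕ} {f : A → WheelV k}

/-- The neighbourhood of a rim vertex is bipartite (hub versus rim), so an odd cycle inside it
would have to alternate between hub and rim colours. -/
theorem eq_none_of_forall_adj_cycle (hk : 2 ≤ k) (hf : IsHom AdjG (WheelAdj k) f)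
    (p : ZMod (2 * k + 1) → A) (hp : ∀ i, AdjG (p i) (p (i + 1))) {v : A}
    (hv : ∀ i, AdjG v (p i)) : f v = none := by
  by_contra hne
  obtain ⟨t, ht⟩ := Option.ne_none_iff_exists'.mp hne
  refine ZMod.not_forall_iff_not_of_odd (odd_two_mul_add_one k) (fun i => f (p i) = none)
    fun i => ⟨fun h0 h1 => ?_, fun h1 => ?_⟩
  · have := hf _ _ (hp i)
    rw [h0, h1] at this
    exact this
  · have hi := hf _ _ (hv i)
    have hi1 := hf _ _ (hv (i + 1))
    have hpi := hf _ _ (hp i)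
    obtain ⟨c, hc⟩ := Option.ne_none_iff_exists'.mp h1
    by_contra h2
    obtain ⟨d, hd⟩ := Option.ne_none_iff_exists'.mp h2
    rw [ht, hc] at hi
    rw [ht, hd] at hi1
    rw [hc, hd] at hpi
    exact rim_triangle_free hk hi hpi hi1

theorem ne_none_of_adj_none (hf : IsHom AdjG (WheelAdj k) f) {u v : A} (h : AdjG v u)
    (hu : f u = none) : f v ≠ none := by
  have := hf _ _ h
  rw [hu] at this
  exact ne_none_of_wheelAdj_none this

theorem exists_eq_add_mul_of_cycle (hf : IsHom AdjG (WheelAdj k) f) (p : ZMod (2 * k + 1) → A)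
    (hp : ∀ i, AdjG (p i) (p (i + 1))) (hrim : ∀ i, f (p i) ≠ none) :
    ∃ c δ : ZMod (2 * k + 1), (δ = 1 ∨ δ = -1) ∧ ∀ i, f (p i) = some (c + i * δ) := by
  choose col hcol using fun i => Option.ne_none_iff_exists'.mp (hrim i)
  obtain ⟨δ, hδ, hlin⟩ := ZMod.exists_eq_add_mul_of_odd (odd_two_mul_add_one k) col fun i => by
    have := hf _ _ (hp i)
    rwa [hcol, hcol, wheelAdj_some_some] at this
  exact ⟨col 0, δ, hδ, fun i => by rw [hcol, hlin]⟩

theorem colourForced_of_cycle (hk : 2 ≤ k) (hsymm : ∀ u v, AdjG u v → AdjG v u)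
    (hf : IsHom AdjG (WheelAdj k) f) (p : ZMod (2 * k + 1) → A)
    (hp : ∀ i, AdjG (p i) (p (i + 1))) (hhub : ∀ i, ∃ u, AdjG (p i) u ∧ f u = none) (i) :
    ColourForced AdjG (WheelAdj k) f (p i) := by
  obtain ⟨c, δ, hδ, hcol⟩ := exists_eq_add_mul_of_cycle hf p hp fun j =>
    (hhub j).elim fun _ hu => ne_none_of_adj_none hf hu.1 hu.2
  intro β hβ
  obtain ⟨u, hu, hfu⟩ := hhub i
  have h0 := hβ u hu
  have hprev := hβ (p (i - 1)) (hsymm _ _ (by simpa using hp (i - 1)))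
  have hnext := hβ (p (i + 1)) (hp i)
  rw [hfu] at h0
  rw [hcol, show c + (i - 1) * δ = c + i * δ - δ by ring] at hprev
  rw [hcol, show c + (i + 1) * δ = c + i * δ + δ by ring] at hnext
  rw [hcol]
  exact eq_some_of_wheelAdj hk hδ h0 hprev hnext

end OddCycle

namespace GV

variable {k : ℕ}

def swap : GV k → GV k
  | x => y
  | y => x
  | zx i => zy i
  | zy i => zx i
  | bx => b_y
  | b_y => bx
  | w i => w i
  | al => al

theorem isHom_swap : IsHom (GAdj k) (GAdj k) swap := by
  intro u v h
  cases u <;> cases v <;> exact h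

end GV

section Gadget

variable {k : ℕ}

theorem gAdj_symm (u v : GV k) (h : GAdj k u v) : GAdj k v u := h.symm

theorem gAdj_irrefl (hk : 0 < k) (v : GV k) : ¬ GAdj k v v := by
  have h4 : (1 : ZMod (4 * k - 2)) ≠ 0 := by
    exact_mod_cast ZMod.natCast_ne_zero_of_lt_two_mul (m := 1) one_pos (by omega) (by omega)
  have h2 : (1 : ZMod (2 * k + 1)) ≠ 0 := by
    exact_mod_cast ZMod.natCast_ne_zero_of_lt_two_mul (m := 1) one_pos (by omega) (by omega)
  cases v <;> simp [GAdj, GE, h4, h2]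

variable {f : GV k → WheelV k}

theorem al_eq_none (hk : 2 ≤ k) (hf : IsHom (GAdj k) (WheelAdj k) f) : f .al = none :=
  eq_none_of_forall_adj_cycle hk hf GV.w (fun _ => .inl rfl) fun _ => .inl trivial

theorem colourForced_w (hk : 2 ≤ k) (hf : IsHom (GAdj k) (WheelAdj k) f) (hal : f .al = none)
    (i : ZMod (2 * k + 1)) : ColourForced (GAdj k) (WheelAdj k) f (.w i) :=
  colourForced_of_cycle hk gAdj_symm hf GV.w (fun _ => .inl rfl)
    (fun _ => ⟨.al, .inr trivial, hal⟩) i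

theorem colourForced_al (hk : 2 ≤ k) (hf : IsHom (GAdj k) (WheelAdj k) f)
    (hal : f .al = none) : ColourForced (GAdj k) (WheelAdj k) f .al := by
  intro β hβ
  obtain ⟨c₀, hc₀⟩ := Option.ne_none_iff_exists'.mp
    (ne_none_of_adj_none hf (.inr trivial : GAdj k (.w 0) .al) hal)
  obtain ⟨c₁, hc₁⟩ := Option.ne_none_iff_exists'.mp
    (ne_none_of_adj_none hf (.inr trivial : GAdj k (.w 1) .al) hal)
  have h01 := hf (.w 0) (.w 1) (.inl (zero_add 1).symm)
  have h0 := hβ (.w 0) (.inl trivial)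
  have h1 := hβ (.w 1) (.inl trivial)
  rw [hc₀, hc₁] at h01
  rw [hc₀] at h0
  rw [hc₁] at h1
  rw [hal]
  by_contra hne
  obtain ⟨t, rfl⟩ := Option.ne_none_iff_exists'.mp hne
  exact rim_triangle_free hk h0 h01 h1

/-- The closed walk `b^x z_s z_{s+1} ⋯ z_{s+2k-1}` of length `2k+1`, with `b^x` at index `2k`. -/
def zWalk (k s : ℕ) (i : ZMod (2 * k + 1)) : GV k :=
  if i.val = 2 * k then .bx else .zx ((s + i.val : ℕ) : ZMod (4 * k - 2))

theorem zWalk_natCast {s m : ℕ} (hm : m < 2 * k) :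
    zWalk k s m = .zx ((s + m : ℕ) : ZMod (4 * k - 2)) := by
  rw [zWalk, ZMod.val_natCast, Nat.mod_eq_of_lt (by omega), if_neg hm.ne]

theorem zWalk_two_mul {s : ℕ} : zWalk k s (2 * k : ℕ) = .bx := by
  rw [zWalk, ZMod.val_natCast, Nat.mod_eq_of_lt (by omega), if_pos rfl]

theorem gAdj_bx_zx {t : ℕ} (ht : t = 0 ∨ t = 2 * k - 1 ∨ t = 4 * k - 2) :
    GAdj k .bx (.zx (t : ZMod (4 * k - 2))) := by
  refine .inl ?_
  rcases ht with rfl | rfl | rfl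
  · exact .inl Nat.cast_zero
  · exact .inr rfl
  · exact .inl (ZMod.natCast_self _)

theorem zWalk_adj (hk : 0 < k) {s : ℕ} (hs : s = 0 ∨ s = 2 * k - 1) (i : ZMod (2 * k + 1)) :
    GAdj k (zWalk k s i) (zWalk k s (i + 1)) := by
  obtain ⟨m, hm, rfl⟩ : ∃ m < 2 * k + 1, (m : ZMod (2 * k + 1)) = i :=
    ⟨i.val, ZMod.val_lt i, ZMod.natCast_zmod_val i⟩
  rw [← Nat.cast_add_one]
  rcases (by omega : m + 1 < 2 * k ∨ m + 1 = 2 * k ∨ m = 2 * k) with h | h | rfl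
  · rw [zWalk_natCast h, zWalk_natCast (by omega)]
    exact .inl (show ((s + (m + 1) : ℕ) : ZMod (4 * k - 2)) = ((s + m : ℕ) : ZMod _) + 1 by
      push_cast; ring)
  · rw [zWalk_natCast (by omega), h, zWalk_two_mul]
    exact gAdj_symm _ _ (gAdj_bx_zx (by omega))
  · rw [zWalk_two_mul, show ((2 * k + 1 : ℕ) : ZMod (2 * k + 1)) = ((0 : ℕ) : ZMod _) by simp,
      zWalk_natCast (by omega)]
    exact gAdj_bx_zx (by omega)

theorem exists_hub_nbr_zWalk (hx : f .x = none) (hy : f .y = none) (hal : f .al = none)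
    (s : ℕ) (i : ZMod (2 * k + 1)) : ∃ u, GAdj k (zWalk k s i) u ∧ f u = none := by
  unfold zWalk
  split_ifs
  · exact ⟨.y, .inr trivial, hy⟩
  · by_cases h : ((s + i.val : ℕ) : ZMod (4 * k - 2)) = 1 ∨
        ((s + i.val : ℕ) : ZMod (4 * k - 2)) = ((2 * k : ℕ) : ZMod (4 * k - 2))
    · exact ⟨.x, .inr h, hx⟩
    · exact ⟨.al, .inr (not_or.mp h), hal⟩

theorem exists_zWalk_eq_zx (hk : 0 < k) (j : ZMod (4 * k - 2)) :
    ∃ s i, (s = 0 ∨ s = 2 * k - 1) ∧ zWalk k s i = .zx j := by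
  have : NeZero (4 * k - 2) := ⟨by omega⟩
  obtain ⟨m, hm, rfl⟩ : ∃ m < 4 * k - 2, (m : ZMod (4 * k - 2)) = j :=
    ⟨j.val, ZMod.val_lt j, ZMod.natCast_zmod_val j⟩
  by_cases h : m < 2 * k
  · exact ⟨0, m, .inl rfl, by rw [zWalk_natCast h, zero_add]⟩
  · exact ⟨2 * k - 1, (m - (2 * k - 1) : ℕ), .inr rfl, by
      rw [zWalk_natCast (by omega), Nat.add_sub_cancel' (by omega)]⟩

end Gadget

section XSide

variable {k : ℕ} {f : GV k → WheelV k}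

theorem colourForced_zWalk (hk : 2 ≤ k) (hf : IsHom (GAdj k) (WheelAdj k) f)
    (hx : f .x = none) (hy : f .y = none) (hal : f .al = none) {s : ℕ}
    (hs : s = 0 ∨ s = 2 * k - 1) (i : ZMod (2 * k + 1)) :
    ColourForced (GAdj k) (WheelAdj k) f (zWalk k s i) :=
  colourForced_of_cycle hk gAdj_symm hf _ (zWalk_adj (by omega) hs)
    (exists_hub_nbr_zWalk hx hy hal s) i

/-- Along the two closed walks `b^x z_0 ⋯ z_{2k-1}` and `b^x z_{2k-1} ⋯ z_{4k-3} z_0` the colours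
wind around the rim in opposite directions, so `z_1` and `z_{2k}` get colours four steps apart
and have no common neighbour on the rim. -/
theorem colourForced_x (hk : 2 ≤ k) (hf : IsHom (GAdj k) (WheelAdj k) f)
    (hx : f .x = none) (hy : f .y = none) (hal : f .al = none) :
    ColourForced (GAdj k) (WheelAdj k) f .x := by
  have hrim (s : ℕ) (i : ZMod (2 * k + 1)) : f (zWalk k s i) ≠ none :=
    (exists_hub_nbr_zWalk hx hy hal s i).elim fun _ hu => ne_none_of_adj_none hf hu.1 hu.2
  obtain ⟨c₁, δ₁, hδ₁, h₁⟩ :=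
    exists_eq_add_mul_of_cycle hf _ (zWalk_adj (by omega) (.inl rfl)) (hrim 0)
  obtain ⟨c₂, δ₂, -, h₂⟩ :=
    exists_eq_add_mul_of_cycle hf _ (zWalk_adj (by omega) (.inr rfl)) (hrim (2 * k - 1))
  have hz₁ := h₁ (1 : ℕ)
  have hb₁ := h₁ (2 * k : ℕ)
  have hm₁ := h₁ (2 * k - 1 : ℕ)
  have hm₂ := h₂ (0 : ℕ)
  have hz₂ := h₂ (1 : ℕ)
  have hb₂ := h₂ (2 * k : ℕ)
  rw [zWalk_natCast (by omega), zero_add] at hz₁ hm₁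
  rw [zWalk_natCast (by omega), add_zero] at hm₂
  rw [zWalk_natCast (by omega), Nat.sub_add_cancel (by omega)] at hz₂
  rw [zWalk_two_mul] at hb₁ hb₂
  rw [hm₁, Option.some_inj] at hm₂
  rw [hb₁, Option.some_inj] at hb₂
  have hwrap : 2 * (k : ZMod (2 * k + 1)) + 1 = 0 := by exact_mod_cast ZMod.natCast_self _
  intro β hβ
  have h1 := hβ (.zx 1) (.inl (.inl rfl))
  have h2 := hβ (.zx ((2 * k : ℕ) : ZMod (4 * k - 2))) (.inl (.inr rfl))
  rw [Nat.cast_one] at hz₁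
  rw [hz₁] at h1
  rw [hz₂, show c₂ + ((1 : ℕ) : ZMod (2 * k + 1)) * δ₂ = c₁ + 1 * δ₁ + 4 * -δ₁ by
    push_cast [Nat.cast_sub (by omega : 1 ≤ 2 * k)] at hm₂ hb₂ ⊢
    linear_combination -2 * hm₂ + hb₂ + (δ₁ + δ₂) * hwrap] at h2
  rw [hx]
  exact eq_none_of_wheelAdj hk (by rcases hδ₁ with rfl | rfl <;> simp) h1 h2

theorem colourForced_xSide (hk : 2 ≤ k) (hf : IsHom (GAdj k) (WheelAdj k) f)
    (hx : f .x = none) (hy : f .y = none) (hal : f .al = none) :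
    ColourForced (GAdj k) (WheelAdj k) f .x ∧ ColourForced (GAdj k) (WheelAdj k) f .bx ∧
      ∀ j, ColourForced (GAdj k) (WheelAdj k) f (.zx j) := by
  refine ⟨colourForced_x hk hf hx hy hal, ?_, fun j => ?_⟩
  · rw [← zWalk_two_mul (s := 0)]
    exact colourForced_zWalk hk hf hx hy hal (.inl rfl) _
  · obtain ⟨s, i, hs, hsi⟩ := exists_zWalk_eq_zx (by omega) j
    rw [← hsi]
    exact colourForced_zWalk hk hf hx hy hal hs i

end XSide

/-- For `k ≥ 2`, any homomorphism from the freezing gadget `F_k(x,y)` to the odd wheel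
`W_{2k+1}` mapping both `x` and `y` to the hub `α` is frozen. -/
theorem stmt_14 (k : ℕ) (hk : 2 ≤ k) (f : GV k → WheelV k)
    (hf : IsHom (GAdj k) (WheelAdj k) f)
    (hx : f GV.x = none) (hy : f GV.y = none) :
    Frozen (GAdj k) (WheelAdj k) f := by
  have hal : f .al = none := al_eq_none hk hf
  obtain ⟨hfx, hfbx, hfzx⟩ := colourForced_xSide hk hf hx hy hal
  obtain ⟨hfy, hfby, hfzy⟩ := colourForced_xSide hk (hf.comp GV.isHom_swap) hy hx hal
  refine frozen_of_forall_colourForced (gAdj_irrefl (by omega)) hf fun v => ?_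
  cases v with
  | x => exact hfx
  | y => exact hfy.of_comp GV.isHom_swap
  | zx j => exact hfzx j
  | zy j => exact (hfzy j).of_comp GV.isHom_swap
  | bx => exact hfbx
  | b_y => exact hfby.of_comp GV.isHom_swap
  | w i => exact colourForced_w hk hf hal i
  | al => exact colourForced_al hk hf hal
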